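/- For every α ∈ (0, 1/2) and every T > 0 there exists a constant C > 0 (depending only on α and T) such that for all t, t̄ with 0 ≤ t ≤ t̄ ≤ T and all x, x̄ ∈ [0,1], ∫₀ᵗ ∫₀¹ |G^N_{t−s}(x,y) − G^N_{t̄−s}(x̄,y)|² dy ds ≤ C · (|x̄ − x|^{2α} + |t̄ − t|^{α}). -/

import Mathlib

/-!
In the basis `cos (ω_k y)`, `ω_k = (k + 1) π`, the difference `G_{t-s}(x, ·) - G_{t'-s}(x', ·)` has
coefficients `2 e^{-ω_k² (t-s)} (cos ω_k x - cos ω_k x' + (1 - e^{-ω_k² (t'-t)}) cos ω_k x')`, so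
by Parseval the `y`-integral is a sum of their squares, and integrating `e^{-2 ω_k² (t-s)}` in `s`
costs a factor `1 / (2 ω_k²)`. Interpolating `(cos a - cos b)² ≤ min 4 |a - b|²` and
`(1 - e^{-u})² ≤ min 1 u` with exponent `α` bounds the `k`-th term by
`ω_k ^ (2α - 2) (4 |x' - x| ^ 2α + (t' - t) ^ α)`, which is summable in `k` because `α < 1/2`.
-/

open Real MeasureTheory

/-- The Neumann heat kernel on `[0,1]`:
`G^N_t(x,y) = 1 + 2 ∑_{k=1}^∞ e^{-k²π²t} cos(kπx) cos(kπy)`. -/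
noncomputable def GN (t x y : ℝ) : ℝ :=
  1 + 2 * ∑' k : ℕ, Real.exp (-((k + 1 : ℝ) ^ 2 * π ^ 2 * t)) *
      Real.cos ((k + 1 : ℝ) * π * x) * Real.cos ((k + 1 : ℝ) * π * y)

noncomputable def neumannFreq (k : ℕ) : ℝ := (k + 1) * π

lemma neumannFreq_pos (k : ℕ) : 0 < neumannFreq k := by unfold neumannFreq; positivity

lemma integral_cos_int_mul_pi_mul (m : ℤ) :
    ∫ y in (0 : ℝ)..1, cos (m * π * y) = if m = 0 then 1 else 0 := by
  split_ifs with hm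
  · simp [hm]
  · have hc : (m : ℝ) * π ≠ 0 := mul_ne_zero (Int.cast_ne_zero.2 hm) pi_ne_zero
    simp [intervalIntegral.integral_comp_mul_left (fun y => cos y) hc, integral_cos,
      sin_int_mul_pi]

lemma integral_cos_neumannFreq_mul_cos (j k : ℕ) :
    ∫ y in (0 : ℝ)..1, cos (neumannFreq j * y) * cos (neumannFreq k * y) =
      if j = k then 1 / 2 else 0 := by
  have h_prod (y : ℝ) : cos (neumannFreq j * y) * cos (neumannFreq k * y) =
      (cos (((j + k + 2 : ℤ) : ℝ) * π * y) + cos (((j - k : ℤ) : ℝ) * π * y)) / 2 := by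
    have e₁ : ((j + k + 2 : ℤ) : ℝ) * π * y = neumannFreq j * y + neumannFreq k * y := by
      simp only [neumannFreq]; push_cast; ring
    have e₂ : ((j - k : ℤ) : ℝ) * π * y = neumannFreq j * y - neumannFreq k * y := by
      simp only [neumannFreq]; push_cast; ring
    rw [e₁, e₂, cos_add, cos_sub]
    ring
  have h_int (m : ℤ) : IntervalIntegrable (fun y => cos (m * π * y)) volume 0 1 :=
    (continuous_cos.comp (continuous_const.mul continuous_id)).intervalIntegrable 0 1
  simp_rw [h_prod]
  rw [intervalIntegral.integral_div, intervalIntegral.integral_add (h_int _) (h_int _),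
    integral_cos_int_mul_pi_mul, integral_cos_int_mul_pi_mul]
  have : (j + k + 2 : ℤ) ≠ 0 := by omega
  rcases eq_or_ne j k with rfl | hjk
  · simp [this]
  · simp [hjk, this, sub_eq_zero]

lemma abs_mul_le_abs_of_abs_le_one {c u : ℝ} (hu : |u| ≤ 1) : |c * u| ≤ |c| := by
  rw [abs_mul]; exact mul_le_of_le_one_right (abs_nonneg c) hu

lemma integral_tsum_mul_mul_eq {f : ℕ → ℝ → ℝ} {d : ℕ → ℝ} {g : ℝ → ℝ} {a b : ℝ}
    (hd : Summable fun k => |d k|) (hf : ∀ k, Continuous (f k)) (hf_le : ∀ k y, |f k y| ≤ 1)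
    (hg : Continuous g) :
    ∫ y in a..b, (∑' k, d k * f k y) * g y = ∑' k, d k * ∫ y in a..b, f k y * g y := by
  have h_sum (y : ℝ) : Summable fun k => d k * f k y :=
    hd.of_norm_bounded fun k => abs_mul_le_abs_of_abs_le_one (hf_le k y)
  have h := intervalIntegral.hasSum_integral_of_dominated_convergence (μ := volume) (a := a)
    (b := b) (F := fun k y => d k * f k y * g y) (fun k y => |d k| * |g y|)
    (fun k => ((continuous_const.mul (hf k)).mul hg).aestronglyMeasurable)
    (fun k => ae_of_all _ fun y _ => by
      rw [Real.norm_eq_abs, abs_mul]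
      exact mul_le_mul_of_nonneg_right (abs_mul_le_abs_of_abs_le_one (hf_le k y)) (abs_nonneg _))
    (ae_of_all _ fun y _ => hd.mul_right _)
    (by simp_rw [tsum_mul_right]; exact (continuous_const.mul hg.abs).intervalIntegrable _ _)
    (ae_of_all _ fun y _ => (h_sum y).hasSum.mul_right (g y))
  rw [← h.tsum_eq]
  simp_rw [mul_assoc, intervalIntegral.integral_const_mul]

lemma integral_sq_tsum_mul_cos_neumannFreq {d : ℕ → ℝ} (hd : Summable fun k => |d k|) :
    ∫ y in (0 : ℝ)..1, (∑' k, d k * cos (neumannFreq k * y)) ^ 2 = ∑' k, d k ^ 2 / 2 := by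
  have h_cont (k : ℕ) : Continuous fun y => cos (neumannFreq k * y) := by fun_prop
  have h_le (k : ℕ) (y : ℝ) : |cos (neumannFreq k * y)| ≤ 1 := abs_cos_le_one _
  have hD : Continuous fun y => ∑' k, d k * cos (neumannFreq k * y) :=
    continuous_tsum (fun k => continuous_const.mul (h_cont k)) hd
      fun k y => abs_mul_le_abs_of_abs_le_one (h_le k y)
  have h_coeff (k : ℕ) :
      ∫ y in (0 : ℝ)..1, cos (neumannFreq k * y) * ∑' j, d j * cos (neumannFreq j * y) =
        d k / 2 := by
    simp_rw [mul_comm (cos (neumannFreq k * _)), integral_tsum_mul_mul_eq hd h_cont h_le (h_cont k),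
      integral_cos_neumannFreq_mul_cos]
    rw [tsum_eq_single k fun j hj => by simp [hj], if_pos rfl]
    ring
  simp_rw [sq, integral_tsum_mul_mul_eq hd h_cont h_le hD, h_coeff]
  ring_nf

lemma GN_eq_tsum (t x y : ℝ) :
    GN t x y = 1 + 2 * ∑' k, exp (-(neumannFreq k ^ 2 * t)) * cos (neumannFreq k * x) *
      cos (neumannFreq k * y) := by
  simp only [GN, neumannFreq, mul_pow]

lemma summable_abs_exp_neg_neumannFreq_sq_mul_cos {a : ℝ} (ha : 0 < a) (x : ℝ) :
    Summable fun k => |exp (-(neumannFreq k ^ 2 * a)) * cos (neumannFreq k * x)| := by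
  have h_exp : Summable fun k : ℕ => exp (-(π ^ 2 * a) * ((k : ℝ) + 1) ^ 2) :=
    summable_exp_nat_mul_of_ge (neg_lt_zero.2 (by positivity)) fun k => by nlinarith
  refine h_exp.of_nonneg_of_le (fun k => abs_nonneg _) fun k => ?_
  calc |exp (-(neumannFreq k ^ 2 * a)) * cos (neumannFreq k * x)|
      ≤ |exp (-(neumannFreq k ^ 2 * a))| := abs_mul_le_abs_of_abs_le_one (abs_cos_le_one _)
    _ = exp (-(π ^ 2 * a) * ((k : ℝ) + 1) ^ 2) := by
      rw [abs_exp, neumannFreq]; ring_nf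

lemma GN_sub_GN_eq_tsum {a b : ℝ} (ha : 0 < a) (hb : 0 < b) (x x' y : ℝ) :
    GN a x y - GN b x' y = ∑' k, 2 * (exp (-(neumannFreq k ^ 2 * a)) * cos (neumannFreq k * x) -
      exp (-(neumannFreq k ^ 2 * b)) * cos (neumannFreq k * x')) * cos (neumannFreq k * y) := by
  have h_summable {c : ℝ} (hc : 0 < c) (z : ℝ) : Summable fun k =>
      exp (-(neumannFreq k ^ 2 * c)) * cos (neumannFreq k * z) * cos (neumannFreq k * y) :=
    (summable_abs_exp_neg_neumannFreq_sq_mul_cos hc z).of_norm_bounded fun k =>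
      abs_mul_le_abs_of_abs_le_one (abs_cos_le_one _)
  rw [GN_eq_tsum, GN_eq_tsum, add_sub_add_left_eq_sub, ← mul_sub,
    ← (h_summable ha x).tsum_sub (h_summable hb x'), ← tsum_mul_left]
  exact tsum_congr fun k => by ring

lemma integral_sq_abs_GN_sub_GN {a b : ℝ} (ha : 0 < a) (hb : 0 < b) (x x' : ℝ) :
    ∫ y in (0 : ℝ)..1, |GN a x y - GN b x' y| ^ 2 = ∑' k, 2 *
      (exp (-(neumannFreq k ^ 2 * a)) * cos (neumannFreq k * x) -
        exp (-(neumannFreq k ^ 2 * b)) * cos (neumannFreq k * x')) ^ 2 := by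
  have hd : Summable fun k => |2 * (exp (-(neumannFreq k ^ 2 * a)) * cos (neumannFreq k * x) -
      exp (-(neumannFreq k ^ 2 * b)) * cos (neumannFreq k * x'))| :=
    (((summable_abs_exp_neg_neumannFreq_sq_mul_cos ha x).add
      (summable_abs_exp_neg_neumannFreq_sq_mul_cos hb x')).mul_left 2).of_nonneg_of_le
      (fun k => abs_nonneg _) fun k => by rw [abs_mul, abs_two]; gcongr; exact abs_sub _ _
  simp_rw [sq_abs, GN_sub_GN_eq_tsum ha hb]
  rw [integral_sq_tsum_mul_cos_neumannFreq hd]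
  exact tsum_congr fun k => by ring

lemma integral_integral_sq_abs_GN_sub_GN {t t' : ℝ} (ht : 0 ≤ t) (htt' : t ≤ t') (x x' : ℝ) :
    ∫ s in (0 : ℝ)..t, ∫ y in (0 : ℝ)..1, |GN (t - s) x y - GN (t' - s) x' y| ^ 2 =
      ∫ s in (0 : ℝ)..t, ∑' k, 2 * (exp (-(neumannFreq k ^ 2 * (t - s))) * cos (neumannFreq k * x) -
        exp (-(neumannFreq k ^ 2 * (t' - s))) * cos (neumannFreq k * x')) ^ 2 := by
  refine intervalIntegral.integral_congr_ae ?_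
  filter_upwards [Measure.ae_ne volume t] with s hs_ne hs
  rw [Set.uIoc_of_le ht] at hs
  have hst : s < t := lt_of_le_of_ne hs.2 hs_ne
  exact integral_sq_abs_GN_sub_GN (by linarith) (by linarith) x x'

lemma le_rpow_mul_rpow_of_le_of_le {u A B θ : ℝ} (hu : 0 ≤ u) (hA : u ≤ A) (hB : u ≤ B)
    (hθ₀ : 0 ≤ θ) (hθ₁ : θ ≤ 1) : u ≤ A ^ (1 - θ) * B ^ θ :=
  calc u = u ^ (1 - θ) * u ^ θ := by
        rw [← rpow_add' hu (by norm_num), sub_add_cancel, rpow_one]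
    _ ≤ A ^ (1 - θ) * B ^ θ :=
        mul_le_mul (rpow_le_rpow hu hA (by linarith)) (rpow_le_rpow hu hB hθ₀)
          (rpow_nonneg hu _) (rpow_nonneg (hu.trans hA) _)

lemma sq_cos_sub_cos_le_rpow (a b : ℝ) {α : ℝ} (hα₀ : 0 ≤ α) (hα₁ : α ≤ 1) :
    (cos a - cos b) ^ 2 ≤ 4 * |a - b| ^ (2 * α) := by
  have h_two : (cos a - cos b) ^ 2 ≤ 4 := by
    nlinarith [neg_one_le_cos a, cos_le_one a, neg_one_le_cos b, cos_le_one b]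
  have h_lip : (cos a - cos b) ^ 2 ≤ |a - b| ^ 2 := by
    rw [← sq_abs]; exact pow_le_pow_left₀ (abs_nonneg _) (abs_cos_sub_cos_le a b) 2
  calc (cos a - cos b) ^ 2 ≤ 4 ^ (1 - α) * (|a - b| ^ 2) ^ α :=
        le_rpow_mul_rpow_of_le_of_le (sq_nonneg _) h_two h_lip hα₀ hα₁
    _ ≤ 4 ^ (1 : ℝ) * |a - b| ^ (2 * α) := by
        rw [← rpow_two, ← rpow_mul (abs_nonneg _)]
        gcongr
        · norm_num
        · linarith
    _ = 4 * |a - b| ^ (2 * α) := by rw [rpow_one]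

lemma sq_one_sub_exp_neg_le_rpow {u α : ℝ} (hu : 0 ≤ u) (hα₀ : 0 ≤ α) (hα₁ : α ≤ 1) :
    (1 - exp (-u)) ^ 2 ≤ u ^ α := by
  have h₀ : 0 ≤ 1 - exp (-u) := by simpa using exp_le_one_iff.2 (neg_nonpos.2 hu)
  have h₁ : 1 - exp (-u) ≤ 1 := by linarith [exp_pos (-u)]
  have h_le_u : 1 - exp (-u) ≤ u := by linarith [add_one_le_exp (-u)]
  calc (1 - exp (-u)) ^ 2 ≤ 1 ^ (1 - α) * u ^ α :=
        le_rpow_mul_rpow_of_le_of_le (sq_nonneg _) (by nlinarith) (by nlinarith) hα₀ hα₁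
    _ = u ^ α := by rw [one_rpow, one_mul]

lemma integral_exp_neg_mul_sub_le {c : ℝ} (hc : 0 < c) (t : ℝ) :
    ∫ s in (0 : ℝ)..t, exp (-(c * (t - s))) ≤ 1 / c := by
  have h_deriv (s : ℝ) :
      HasDerivAt (fun s => exp (-(c * (t - s))) / c) (exp (-(c * (t - s)))) s := by
    have h := (((hasDerivAt_id s).const_sub t).const_mul c).neg.exp.div_const c
    simpa [hc.ne'] using h
  rw [intervalIntegral.integral_eq_sub_of_hasDerivAt (fun s _ => h_deriv s)
    ((by fun_prop : Continuous fun s => exp (-(c * (t - s)))).intervalIntegrable _ _)]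
  simp only [sub_self, mul_zero, neg_zero, exp_zero, sub_zero]
  have : 0 ≤ exp (-(c * t)) / c := by positivity
  linarith

lemma integral_sq_heat_mode_sub_le {ω α t t' x x' : ℝ} (hω : 0 < ω) (hα₀ : 0 ≤ α)
    (hα₁ : α ≤ 1) (htt' : t ≤ t') :
    ∫ s in (0 : ℝ)..t, (exp (-(ω ^ 2 * (t - s))) * cos (ω * x) -
        exp (-(ω ^ 2 * (t' - s))) * cos (ω * x')) ^ 2 ≤
      ω ^ (2 * α - 2) * (4 * |x' - x| ^ (2 * α) + (t' - t) ^ α) := by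
  set P := cos (ω * x) - cos (ω * x')
  set Q := 1 - exp (-(ω ^ 2 * (t' - t)))
  have h_factor (s : ℝ) : (exp (-(ω ^ 2 * (t - s))) * cos (ω * x) -
      exp (-(ω ^ 2 * (t' - s))) * cos (ω * x')) ^ 2 =
        exp (-(2 * ω ^ 2 * (t - s))) * (P + Q * cos (ω * x')) ^ 2 := by
    have h_split : exp (-(ω ^ 2 * (t' - s))) =
        exp (-(ω ^ 2 * (t - s))) * exp (-(ω ^ 2 * (t' - t))) := by
      rw [← exp_add]; ring_nf
    rw [h_split, show -(2 * ω ^ 2 * (t - s)) = -(ω ^ 2 * (t - s)) + -(ω ^ 2 * (t - s)) by ring,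
      exp_add]
    ring
  have hP : P ^ 2 ≤ 4 * (ω ^ (2 * α) * |x' - x| ^ (2 * α)) :=
    calc P ^ 2 ≤ 4 * |ω * x - ω * x'| ^ (2 * α) := sq_cos_sub_cos_le_rpow _ _ hα₀ hα₁
      _ = 4 * (ω ^ (2 * α) * |x' - x| ^ (2 * α)) := by
        rw [← mul_sub, abs_mul, abs_of_pos hω, mul_rpow hω.le (abs_nonneg _), abs_sub_comm]
  have hQ : Q ^ 2 ≤ ω ^ (2 * α) * (t' - t) ^ α :=
    calc Q ^ 2 ≤ (ω ^ 2 * (t' - t)) ^ α :=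
          sq_one_sub_exp_neg_le_rpow (by nlinarith [sq_nonneg ω]) hα₀ hα₁
      _ = ω ^ (2 * α) * (t' - t) ^ α := by
        rw [mul_rpow (sq_nonneg ω) (by linarith), ← rpow_two, ← rpow_mul hω.le]
  have hPQ : (P + Q * cos (ω * x')) ^ 2 ≤ 2 * (P ^ 2 + Q ^ 2) := by
    nlinarith [cos_sq_le_one (ω * x'), sq_nonneg (P - Q * cos (ω * x')), sq_nonneg Q]
  calc _ = (P + Q * cos (ω * x')) ^ 2 * ∫ s in (0 : ℝ)..t, exp (-(2 * ω ^ 2 * (t - s))) := by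
        simp_rw [h_factor, intervalIntegral.integral_mul_const, mul_comm]
    _ ≤ (P + Q * cos (ω * x')) ^ 2 * (1 / (2 * ω ^ 2)) := by
        gcongr; exact integral_exp_neg_mul_sub_le (by positivity) t
    _ ≤ 2 * (P ^ 2 + Q ^ 2) * (1 / (2 * ω ^ 2)) := by gcongr
    _ ≤ 2 * (4 * (ω ^ (2 * α) * |x' - x| ^ (2 * α)) + ω ^ (2 * α) * (t' - t) ^ α) *
          (1 / (2 * ω ^ 2)) := by gcongr
    _ = ω ^ (2 * α - 2) * (4 * |x' - x| ^ (2 * α) + (t' - t) ^ α) := by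
        rw [rpow_sub hω, rpow_two]; field_simp

lemma summable_neumannFreq_rpow {p : ℝ} (hp : p < -1) : Summable fun k => neumannFreq k ^ p := by
  have h := (summable_nat_add_iff 1).2 (Real.summable_nat_rpow.2 hp)
  refine (h.mul_right (π ^ p)).congr fun k => ?_
  rw [neumannFreq, mul_rpow (by positivity) pi_pos.le]
  push_cast
  rfl

lemma tsum_intervalIntegral_eq_integral_tsum_of_nonneg {f : ℕ → ℝ → ℝ} {a b : ℝ} (hab : a ≤ b)
    (hf : ∀ k, Continuous (f k)) (hf₀ : ∀ k s, 0 ≤ f k s)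
    (h_summable : Summable fun k => ∫ s in a..b, f k s) :
    ∑' k, ∫ s in a..b, f k s = ∫ s in a..b, ∑' k, f k s := by
  simp only [intervalIntegral.integral_of_le hab] at h_summable ⊢
  refine integral_tsum_of_summable_integral_norm (fun k => (hf k).integrableOn_Ioc) ?_
  simpa only [Real.norm_of_nonneg (hf₀ _ _)] using h_summable

theorem neumann_kernel_space_time_increment (α T : ℝ) (hα0 : 0 < α) (hα1 : α < 1 / 2) :
    ∃ C : ℝ, 0 < C ∧ ∀ t t' x x' : ℝ, 0 ≤ t → t ≤ t' → t' ≤ T →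
      x ∈ Set.Icc (0 : ℝ) 1 → x' ∈ Set.Icc (0 : ℝ) 1 →
      (∫ s in (0 : ℝ)..t, ∫ y in (0 : ℝ)..1,
          |GN (t - s) x y - GN (t' - s) x' y| ^ 2) ≤
        C * (|x' - x| ^ (2 * α) + |t' - t| ^ α) := by
  have hS : Summable fun k => neumannFreq k ^ (2 * α - 2) :=
    summable_neumannFreq_rpow (by linarith)
  set S := ∑' k, neumannFreq k ^ (2 * α - 2)
  have hS_pos : 0 < S := hS.tsum_pos (fun k => (rpow_pos_of_pos (neumannFreq_pos k) _).le) 0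
    (rpow_pos_of_pos (neumannFreq_pos 0) _)
  refine ⟨8 * S, by positivity, fun t t' x x' ht htt' _ _ _ => ?_⟩
  set F : ℕ → ℝ → ℝ := fun k s => 2 * (exp (-(neumannFreq k ^ 2 * (t - s))) *
    cos (neumannFreq k * x) - exp (-(neumannFreq k ^ 2 * (t' - s))) * cos (neumannFreq k * x')) ^ 2
  set E := 4 * |x' - x| ^ (2 * α) + (t' - t) ^ α
  have hF_le (k : ℕ) : ∫ s in (0 : ℝ)..t, F k s ≤ 2 * (neumannFreq k ^ (2 * α - 2) * E) := by
    rw [intervalIntegral.integral_const_mul]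
    gcongr
    exact integral_sq_heat_mode_sub_le (neumannFreq_pos k) hα0.le (by linarith) htt'
  have hF_summable : Summable fun k => ∫ s in (0 : ℝ)..t, F k s :=
    ((hS.mul_right E).mul_left 2).of_nonneg_of_le
      (fun k => intervalIntegral.integral_nonneg ht fun s _ => by positivity) hF_le
  calc _ = ∫ s in (0 : ℝ)..t, ∑' k, F k s := integral_integral_sq_abs_GN_sub_GN ht htt' x x'
    _ = ∑' k, ∫ s in (0 : ℝ)..t, F k s :=
        (tsum_intervalIntegral_eq_integral_tsum_of_nonneg ht (fun k => by fun_prop)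
          (fun k s => by positivity) hF_summable).symm
    _ ≤ ∑' k, 2 * (neumannFreq k ^ (2 * α - 2) * E) :=
        hF_summable.tsum_le_tsum hF_le ((hS.mul_right E).mul_left 2)
    _ = 2 * S * E := by rw [tsum_mul_left, tsum_mul_right, mul_assoc]
    _ ≤ 8 * S * (|x' - x| ^ (2 * α) + |t' - t| ^ α) := by
        rw [abs_of_nonneg (sub_nonneg.2 htt')]
        nlinarith [mul_nonneg hS_pos.le (rpow_nonneg (sub_nonneg.2 htt') α)]
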